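/- arXiv:2005.04018 — 2 statements merged into one kernel-verified Lean document; each statement's English description precedes it below -/
import Mathlib

section
/- Lex-optimal MD strategies are locally lex-optimal: Let Ω be an absorbing lex-objective. If σ is a lex-optimal MD strategy of Max for Ω and τ is an MD lex-optimal counter-strategy of Min against σ, then both σ and τ are locally lex-optimal. -/
open scoped Classical

/-! ### Lexicographic order on vectors -/

/-- `lexLe x y`: `x ≤_lex y`, i.e. `x = y` or `x i < y i` at the first index `i`
where `x` and `y` differ. -/
def lexLe {n : ℕ} {α : Type*} [LinearOrder α] (x y : Fin n → α) : Prop :=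
  x = y ∨ ∃ i, (∀ j, j < i → x j = y j) ∧ x i < y i

/-- Strict lexicographic order. -/
def lexLt {n : ℕ} {α : Type*} [LinearOrder α] (x y : Fin n → α) : Prop :=
  lexLe x y ∧ x ≠ y

/-- `v` is an upper bound of `X` w.r.t. the lexicographic order. -/
def IsLexUB {n : ℕ} {α : Type*} [LinearOrder α] (X : Set (Fin n → α)) (v : Fin n → α) : Prop :=
  ∀ x ∈ X, lexLe x v

def IsLexLB {n : ℕ} {α : Type*} [LinearOrder α] (X : Set (Fin n → α)) (v : Fin n → α) : Prop :=
  ∀ x ∈ X, lexLe v x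

/-- `v` is the least upper bound (supremum) of `X` w.r.t. the lexicographic order. -/
def IsLexLUB {n : ℕ} {α : Type*} [LinearOrder α] (X : Set (Fin n → α)) (v : Fin n → α) : Prop :=
  IsLexUB X v ∧ ∀ u, IsLexUB X u → lexLe v u

/-- `v` is the greatest lower bound (infimum) of `X` w.r.t. the lexicographic order. -/
def IsLexGLB {n : ℕ} {α : Type*} [LinearOrder α] (X : Set (Fin n → α)) (v : Fin n → α) : Prop :=
  IsLexLB X v ∧ ∀ u, IsLexLB X u → lexLe u v

/-! ### Stochastic games -/

/-- A (simple) stochastic game over a finite state space `S` and a finite label set `L`: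
a partition of states into Max-states and Min-states, finitely many available actions
at every state, and a transition probability function. -/
structure SG (S L : Type) [Fintype S] [Fintype L] where
  isMax : S → Prop
  Act : S → Finset L
  act_nonempty : ∀ s, (Act s).Nonempty
  P : S → L → S → ℝ
  P_nonneg : ∀ s a s', 0 ≤ P s a s'
  P_sum : ∀ s, ∀ a ∈ Act s, ∑ s', P s a s' = 1

variable {S L : Type} [Fintype S] [DecidableEq S] [Fintype L] [DecidableEq L]

/-- A (randomized, history-dependent) strategy: a map from finite histories
`(S × L)* × S` to probability distributions over the available actions. -/
structure Strategy (G : SG S L) where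
  prob : List (S × L) → S → L → ℝ
  nonneg : ∀ h s a, 0 ≤ prob h s a
  sum_one : ∀ h s, ∑ a ∈ G.Act s, prob h s a = 1
  supp : ∀ h s a, a ∉ G.Act s → prob h s a = 0

/-- A strategy is memoryless if it only depends on the current state. -/
def Strategy.Memoryless {G : SG S L} (σ : Strategy G) : Prop :=
  ∀ h h' s, σ.prob h s = σ.prob h' s

/-- A strategy is deterministic if every choice is Dirac. -/
def Strategy.Deterministic {G : SG S L} (σ : Strategy G) : Prop :=
  ∀ h s, ∃ a, σ.prob h s a = 1

/-- Memoryless deterministic strategies. -/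
def Strategy.MD {G : SG S L} (σ : Strategy G) : Prop :=
  σ.Memoryless ∧ σ.Deterministic

/-- The probability that action `a` is played at state `s` after history `h`
when Max plays `σ` and Min plays `τ`. -/
noncomputable def stepProb (G : SG S L) (σ τ : Strategy G) (h : List (S × L)) (s : S)
    (a : L) : ℝ :=
  if G.isMax s then σ.prob h s a else τ.prob h s a

/-- Probability, in the Markov chain induced by `σ` and `τ`, of reaching the set `T`
within `k` steps, starting at state `s` with history `h`. -/
noncomputable def reachAux (G : SG S L) (σ τ : Strategy G) (T : Finset S) :
    ℕ → List (S × L) → S → ℝ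
  | 0, _, s => if s ∈ T then 1 else 0
  | k + 1, h, s =>
      if s ∈ T then 1
      else ∑ a ∈ G.Act s, stepProb G σ τ h s a *
        ∑ s', G.P s a s' * reachAux G σ τ T k (h ++ [(s, a)]) s'

/-- `P_{h,s}^{σ,τ}(Reach T)`: the probability of the reachability property `Reach T`
(the measure of the set of infinite paths that eventually visit `T`), obtained as the
supremum of the step-bounded reachability probabilities. -/
noncomputable def PReach (G : SG S L) (σ τ : Strategy G) (T : Finset S)
    (h : List (S × L)) (s : S) : ℝ :=
  ⨆ k : ℕ, reachAux G σ τ T k h s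

/-- Probability of `A Until t` (reach `t` while only visiting states of `A` before)
within `k` steps. -/
noncomputable def untilAux (G : SG S L) (σ τ : Strategy G) (A : Finset S) (t : S) :
    ℕ → List (S × L) → S → ℝ
  | 0, _, s => if s = t then 1 else 0
  | k + 1, h, s =>
      if s = t then 1
      else if s ∈ A then
        ∑ a ∈ G.Act s, stepProb G σ τ h s a *
          ∑ s', G.P s a s' * untilAux G σ τ A t k (h ++ [(s, a)]) s'
      else 0

/-- `P_{h,s}^{σ,τ}(A Until t)`. -/
noncomputable def PUntil (G : SG S L) (σ τ : Strategy G) (A : Finset S) (t : S)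
    (h : List (S × L)) (s : S) : ℝ :=
  ⨆ k : ℕ, untilAux G σ τ A t k h s

/-- Objectives: reachability `Reach T`, safety `Safe T`, and their quantified
versions given by a weight function `q` on a target set `S'`. -/
inductive Obj (S : Type) where
  | reach (T : Finset S)
  | safe (T : Finset S)
  | qreach (S' : Finset S) (q : S → ℝ)
  | qsafe (S' : Finset S) (q : S → ℝ)

/-- The target set of an objective. -/
def Obj.targets {S : Type} : Obj S → Finset S
  | .reach T => T
  | .safe T => T
  | .qreach S' _ => S'
  | .qsafe S' _ => S'

/-- Plain (non-quantified) objectives: `Reach T` or `Safe T`. -/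
def Obj.Plain {S : Type} : Obj S → Prop
  | .reach _ => True
  | .safe _ => True
  | _ => False

/-- Reachability-type objectives. -/
def Obj.IsReach {S : Type} : Obj S → Prop
  | .reach _ => True
  | .qreach _ _ => True
  | _ => False

/-- `P_{h,s}^{σ,τ}(Ω)` for a single objective `Ω`. -/
noncomputable def objProb (G : SG S L) (σ τ : Strategy G) (h : List (S × L)) (s : S) :
    Obj S → ℝ
  | .reach T => PReach G σ τ T h s
  | .safe T => 1 - PReach G σ τ T h s
  | .qreach S' q => ∑ t ∈ S', PUntil G σ τ S'ᶜ t h s * q t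
  | .qsafe S' q => 1 - ∑ t ∈ S', PUntil G σ τ S'ᶜ t h s * q t

/-- The vector `(P_{h,s}^{σ,τ}(Ω_1),…,P_{h,s}^{σ,τ}(Ω_n))`. -/
noncomputable def payoff (G : SG S L) {n : ℕ} (Ω : Fin n → Obj S) (σ τ : Strategy G)
    (h : List (S × L)) (s : S) : Fin n → ℝ :=
  fun i => objProb G σ τ h s (Ω i)

/-- The set of payoff vectors achievable by Min against a fixed `σ` from state `s`. -/
def minPayoffs (G : SG S L) {n : ℕ} (Ω : Fin n → Obj S) (σ : Strategy G) (s : S) :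
    Set (Fin n → ℝ) :=
  {y | ∃ τ : Strategy G, y = payoff G Ω σ τ [] s}

/-- The set of payoff vectors achievable by Max against a fixed `τ` from state `s`. -/
def maxPayoffs (G : SG S L) {n : ℕ} (Ω : Fin n → Obj S) (τ : Strategy G) (s : S) :
    Set (Fin n → ℝ) :=
  {y | ∃ σ : Strategy G, y = payoff G Ω σ τ [] s}

/-- `v` is the (lower) lex-value `sup_σ inf_τ P_s^{σ,τ}(Ω)` of state `s`, where the
suprema and infima are taken w.r.t. the lexicographic order. -/
def IsLexValue (G : SG S L) {n : ℕ} (Ω : Fin n → Obj S) (s : S) (v : Fin n → ℝ) : Prop :=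
  IsLexLUB {x | ∃ σ : Strategy G, IsLexGLB (minPayoffs G Ω σ s) x} v

/-- `v` is the upper lex-value `inf_τ sup_σ P_s^{σ,τ}(Ω)` of state `s`. -/
def IsLexValueUpper (G : SG S L) {n : ℕ} (Ω : Fin n → Obj S) (s : S) (v : Fin n → ℝ) :
    Prop :=
  IsLexGLB {x | ∃ τ : Strategy G, IsLexLUB (maxPayoffs G Ω τ s) x} v

/-- `σ` is a lex-optimal strategy of Max: from every state `s` (with empty history) it
guarantees the lex-value `v s` against every strategy of Min,
i.e. `inf_τ P_s^{σ,τ}(Ω) = v s` in the lexicographic order. -/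
def MaxOptimal (G : SG S L) {n : ℕ} (Ω : Fin n → Obj S) (σ : Strategy G)
    (v : S → Fin n → ℝ) : Prop :=
  ∀ s, IsLexGLB (minPayoffs G Ω σ s) (v s)

/-- `τ` is a lex-optimal strategy of Min: `sup_σ P_s^{σ,τ}(Ω) = v s`. -/
def MinOptimal (G : SG S L) {n : ℕ} (Ω : Fin n → Obj S) (τ : Strategy G)
    (v : S → Fin n → ℝ) : Prop :=
  ∀ s, IsLexLUB (maxPayoffs G Ω τ s) (v s)

/-- `τ` is a lex-optimal counter-strategy against `σ`:
`P_s^{σ,τ}(Ω) = inf_{τ'} P_s^{σ,τ'}(Ω)` for every `s`. -/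
def OptimalCounter (G : SG S L) {n : ℕ} (Ω : Fin n → Obj S) (σ τ : Strategy G) : Prop :=
  ∀ s, IsLexGLB (minPayoffs G Ω σ s) (payoff G Ω σ τ [] s)

/-- A state is absorbing (a sink) if all its actions self-loop with probability 1. -/
def SG.Absorbing (G : SG S L) (s : S) : Prop := ∀ a ∈ G.Act s, G.P s a s = 1

/-- A lex-objective is absorbing if all its target sets consist of sinks only. -/
def AbsorbingObj (G : SG S L) {n : ℕ} (Ω : Fin n → Obj S) : Prop :=
  ∀ i, ∀ t ∈ (Ω i).targets, G.Absorbing t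

/-- The lex-value of action `a` at state `s`: `v(s,a) = Σ_{s'} P(s,a,s')·v(s')`. -/
noncomputable def actionVal (G : SG S L) {n : ℕ} (v : S → Fin n → ℝ) (s : S) (a : L) :
    Fin n → ℝ :=
  fun i => ∑ s', G.P s a s' * v s' i

/-- Action `a` is lex-optimal at `s`: its lex-value is maximal among the available
actions if `s` is a Max-state, and minimal if `s` is a Min-state. -/
def OptAction (G : SG S L) {n : ℕ} (v : S → Fin n → ℝ) (s : S) (a : L) : Prop :=
  (G.isMax s → ∀ b ∈ G.Act s, lexLe (actionVal G v s b) (actionVal G v s a)) ∧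
  (¬ G.isMax s → ∀ b ∈ G.Act s, lexLe (actionVal G v s a) (actionVal G v s b))

/-- A strategy of Max is locally lex-optimal if at Max-states it only assigns positive
probability to lex-optimal actions. -/
def LocallyOptMax (G : SG S L) {n : ℕ} (v : S → Fin n → ℝ) (σ : Strategy G) : Prop :=
  ∀ h s a, G.isMax s → 0 < σ.prob h s a → OptAction G v s a

/-- A strategy of Min is locally lex-optimal if at Min-states it only assigns positive
probability to lex-optimal actions. -/
def LocallyOptMin (G : SG S L) {n : ℕ} (v : S → Fin n → ℝ) (τ : Strategy G) : Prop :=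
  ∀ h s a, ¬ G.isMax s → 0 < τ.prob h s a → OptAction G v s a

/-- `Zero_i = {s ∈ S : v_i(s) = 0}`. -/
noncomputable def zeroSet {n : ℕ} (v : S → Fin n → ℝ) (i : Fin n) : Finset S :=
  Finset.univ.filter (fun s => v s i = 0)

/-- The final set `F = ⋃_{k∈R} S_k ∪ ⋂_{k∈R} Zero_k`, where `R` is the set of indices
of reachability objectives (with `F = S` when `R = ∅`). -/
noncomputable def finalSet {n : ℕ} (Ω : Fin n → Obj S) (v : S → Fin n → ℝ) : Finset S :=
  ((Finset.univ.filter (fun i => (Ω i).IsReach)).biUnion fun i => (Ω i).targets) ∪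
    Finset.univ.filter fun s => ∀ i, (Ω i).IsReach → v s i = 0

/-!
Since `σ` is optimal and `τ` is an optimal reply, the pair `(σ, τ)` realises the value `v`. At a
state outside the (absorbing) targets the MD pair plays a single action `a`, and as both strategies
are memoryless, one step of unfolding gives `v(s) = v(s,a)`. If Max deviates once to `b` and then
plays `σ`, every reply of Min yields at least `v(s,b)` and `τ` attains it, so this deviation
guarantees exactly `v(s,b)`, which therefore is at most `v(s)`. Dually, a one-step deviation of
Min to `b` against `σ` yields `v(s,b)`, which is at least `v(s)` by optimality of `σ`. At a target
state every action has value `v(s)`.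
-/

theorem lexLe_iff_toLex_le {n : ℕ} {α : Type*} [LinearOrder α] {x y : Fin n → α} :
    lexLe x y ↔ toLex x ≤ toLex y := Iff.rfl

theorem lexLe_antisymm {n : ℕ} {α : Type*} [LinearOrder α] {x y : Fin n → α}
    (hxy : lexLe x y) (hyx : lexLe y x) : x = y :=
  toLex_inj.mp (le_antisymm (lexLe_iff_toLex_le.mp hxy) (lexLe_iff_toLex_le.mp hyx))

theorem toLex_smul_le_toLex_smul {ι : Type*} [LinearOrder ι] {c : ℝ}
    (hc : 0 ≤ c) {x y : ι → ℝ} (h : toLex x ≤ toLex y) : toLex (c • x) ≤ toLex (c • y) := by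
  obtain rfl | hc := hc.eq_or_lt
  · simp
  obtain h | ⟨i, hi, hlt⟩ := h.eq_or_lt
  · rw [toLex_inj.mp h]
  · exact le_of_lt ⟨i, fun j hj => congrArg (c * ·) (hi j hj), mul_lt_mul_of_pos_left hlt hc⟩

theorem lexLe_sum {n : ℕ} {ι : Type*} (F : Finset ι) (c : ι → ℝ) (x y : ι → Fin n → ℝ)
    (hc : ∀ j ∈ F, 0 ≤ c j) (h : ∀ j ∈ F, lexLe (x j) (y j)) :
    lexLe (fun i => ∑ j ∈ F, c j * x j i) (fun i => ∑ j ∈ F, c j * y j i) := by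
  have hsum : ∀ z : ι → Fin n → ℝ, (fun i => ∑ j ∈ F, c j * z j i) = ∑ j ∈ F, c j • z j := by
    intro z; ext i; simp [Finset.sum_apply]
  rw [lexLe_iff_toLex_le, hsum, hsum]
  exact Finset.sum_le_sum fun j hj => toLex_smul_le_toLex_smul (hc j hj) (h j hj)

namespace Strategy

variable {G : SG S L}

def shift (π : Strategy G) (p : S × L) : Strategy G where
  prob h := π.prob (p :: h)
  nonneg h := π.nonneg (p :: h)
  sum_one h := π.sum_one (p :: h)
  supp h := π.supp (p :: h)

omit [DecidableEq S] [DecidableEq L] in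
theorem Memoryless.shift_eq {π : Strategy G} (hπ : π.Memoryless) (p : S × L) : π.shift p = π := by
  cases π
  simp only [shift, mk.injEq]
  funext h s
  exact hπ _ _ s

noncomputable def deviate (π : Strategy G) (s : S) (b : L) (hb : b ∈ G.Act s) : Strategy G where
  prob h s' a := if h = [] ∧ s' = s then (if a = b then 1 else 0) else π.prob h s' a
  nonneg h s' a := by split_ifs <;> first | exact π.nonneg h s' a | norm_num
  sum_one h s' := by
    split_ifs with hc
    · rw [hc.2, Finset.sum_ite_eq' _ _ fun _ => (1 : ℝ), if_pos hb]
    · exact π.sum_one h s'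
  supp h s' a ha := by
    split_ifs with hc hab
    · exact absurd (hab ▸ hc.2 ▸ hb) ha
    · rfl
    · exact π.supp h s' a ha

variable {π : Strategy G} {s : S} {b : L} {hb : b ∈ G.Act s}

theorem deviate_prob_nil_self (c : L) :
    (π.deviate s b hb).prob [] s c = if c = b then 1 else 0 := by
  simp [deviate]

theorem shift_deviate (p : S × L) : (π.deviate s b hb).shift p = π.shift p := by
  simp [deviate, shift]

omit [DecidableEq S] in
theorem prob_eq_ite_of_prob_eq_one {h : List (S × L)} {a : L} (ha : π.prob h s a = 1) (c : L) :
    π.prob h s c = if c = a then 1 else 0 := by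
  split_ifs with hca
  · rw [hca, ha]
  by_cases hc : c ∈ G.Act s
  · have haA : a ∈ G.Act s := by_contra fun haA => by simp [π.supp h s a haA] at ha
    have hrest : ∑ x ∈ (G.Act s).erase a, π.prob h s x = 0 := by
      have := Finset.add_sum_erase _ (π.prob h s) haA
      rw [π.sum_one, ha] at this
      linarith
    exact (Finset.sum_eq_zero_iff_of_nonneg fun x _ => π.nonneg h s x).1 hrest c
      (Finset.mem_erase.2 ⟨hca, hc⟩)
  · exact π.supp h s c hc

omit [DecidableEq S] in
theorem MD.prob_eq_ite_of_pos (hπ : π.MD) {h : List (S × L)} {a : L} (hpos : 0 < π.prob h s a) :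
    a ∈ G.Act s ∧ ∀ h' c, π.prob h' s c = if c = a then 1 else 0 := by
  obtain ⟨a', ha'⟩ := hπ.2 h s
  have hite := prob_eq_ite_of_prob_eq_one ha'
  obtain rfl : a = a' := by_contra fun hne => by simp [hite, hne] at hpos
  refine ⟨by_contra fun ha => hpos.ne' (π.supp h s a ha), fun h' c => ?_⟩
  rw [congrFun (hπ.1 h' h s) c, hite]

end Strategy

section MarkovChain

open Filter Topology

omit [DecidableEq L]

variable {G : SG S L} (σ τ : Strategy G)

omit [DecidableEq S] in
theorem stepProb_nonneg (h : List (S × L)) (s : S) (a : L) : 0 ≤ stepProb G σ τ h s a := by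
  unfold stepProb; split
  exacts [σ.nonneg h s a, τ.nonneg h s a]

omit [DecidableEq S] in
theorem stepProb_sum_one (h : List (S × L)) (s : S) : ∑ a ∈ G.Act s, stepProb G σ τ h s a = 1 := by
  unfold stepProb; split
  exacts [σ.sum_one h s, τ.sum_one h s]

variable (T : Finset S)

theorem reachAux_le_one (k : ℕ) (h : List (S × L)) (s : S) : reachAux G σ τ T k h s ≤ 1 := by
  induction k generalizing h s with
  | zero => simp only [reachAux]; split <;> norm_num
  | succ k ih =>
    simp only [reachAux]
    split
    · rfl
    calc ∑ a ∈ G.Act s, stepProb G σ τ h s a *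
          ∑ s', G.P s a s' * reachAux G σ τ T k (h ++ [(s, a)]) s'
        ≤ ∑ a ∈ G.Act s, stepProb G σ τ h s a * ∑ s', G.P s a s' * 1 := by
          gcongr with a _ s'
          · exact stepProb_nonneg σ τ h s a
          · exact G.P_nonneg s a s'
          · exact ih _ _
      _ = ∑ a ∈ G.Act s, stepProb G σ τ h s a :=
          Finset.sum_congr rfl fun a ha => by simp only [mul_one, G.P_sum s a ha]
      _ = 1 := stepProb_sum_one σ τ h s

theorem reachAux_le_succ (k : ℕ) (h : List (S × L)) (s : S) :
    reachAux G σ τ T k h s ≤ reachAux G σ τ T (k + 1) h s := by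
  induction k generalizing h s with
  | zero =>
    simp only [reachAux]
    split
    · rfl
    refine Finset.sum_nonneg fun a _ => mul_nonneg (stepProb_nonneg σ τ h s a) ?_
    exact Finset.sum_nonneg fun s' _ => mul_nonneg (G.P_nonneg s a s') (by split <;> norm_num)
  | succ k ih =>
    simp only [reachAux]
    split
    · rfl
    gcongr with a _ s'
    · exact stepProb_nonneg σ τ h s a
    · exact G.P_nonneg s a s'
    · exact ih _ _

theorem tendsto_reachAux_PReach (h : List (S × L)) (s : S) :
    Tendsto (fun k => reachAux G σ τ T k h s) atTop (𝓝 (PReach G σ τ T h s)) :=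
  tendsto_atTop_ciSup (monotone_nat_of_le_succ fun k => reachAux_le_succ σ τ T k h s)
    ⟨1, by rintro _ ⟨k, rfl⟩; exact reachAux_le_one σ τ T k h s⟩

theorem PReach_of_notMem {s : S} (hs : s ∉ T) (h : List (S × L)) :
    PReach G σ τ T h s = ∑ a ∈ G.Act s, stepProb G σ τ h s a *
      ∑ s', G.P s a s' * PReach G σ τ T (h ++ [(s, a)]) s' := by
  have hstep : (fun k => reachAux G σ τ T (k + 1) h s) = fun k => ∑ a ∈ G.Act s,
      stepProb G σ τ h s a * ∑ s', G.P s a s' * reachAux G σ τ T k (h ++ [(s, a)]) s' := by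
    funext k; simp [reachAux, hs]
  refine tendsto_nhds_unique ((tendsto_reachAux_PReach σ τ T h s).comp (tendsto_add_atTop_nat 1)) ?_
  rw [Function.comp_def, hstep]
  exact tendsto_finsetSum _ fun a _ => (tendsto_finsetSum _ fun s' _ =>
    (tendsto_reachAux_PReach σ τ T _ s').const_mul _).const_mul _

theorem reachAux_cons (p : S × L) (k : ℕ) (h : List (S × L)) (s : S) :
    reachAux G σ τ T k (p :: h) s = reachAux G (σ.shift p) (τ.shift p) T k h s := by
  induction k generalizing h s with
  | zero => rfl
  | succ k ih =>
    simp only [reachAux, List.cons_append, ih]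
    rfl

theorem PReach_cons (p : S × L) (h : List (S × L)) (s : S) :
    PReach G σ τ T (p :: h) s = PReach G (σ.shift p) (τ.shift p) T h s := by
  simp only [PReach, reachAux_cons]

variable {σ τ}

theorem objProb_cons {o : Obj S} (ho : o.Plain) (p : S × L) (h : List (S × L)) (s : S) :
    objProb G σ τ (p :: h) s o = objProb G (σ.shift p) (τ.shift p) h s o := by
  cases o with
  | reach T => exact PReach_cons σ τ T p h s
  | safe T => simp only [objProb, PReach_cons]
  | qreach | qsafe => exact ho.elim

theorem objProb_of_notMem_targets {o : Obj S} (ho : o.Plain) {s : S} (hs : s ∉ o.targets)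
    (h : List (S × L)) :
    objProb G σ τ h s o = ∑ a ∈ G.Act s, stepProb G σ τ h s a *
      ∑ s', G.P s a s' * objProb G σ τ (h ++ [(s, a)]) s' o := by
  cases o with
  | reach T => exact PReach_of_notMem σ τ T hs h
  | safe T =>
    simp only [objProb, PReach_of_notMem σ τ T hs h]
    calc 1 - ∑ a ∈ G.Act s, stepProb G σ τ h s a *
          ∑ s', G.P s a s' * PReach G σ τ T (h ++ [(s, a)]) s'
        = ∑ a ∈ G.Act s, stepProb G σ τ h s a *
            (1 - ∑ s', G.P s a s' * PReach G σ τ T (h ++ [(s, a)]) s') := by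
          simp only [mul_sub, mul_one, Finset.sum_sub_distrib, stepProb_sum_one]
      _ = _ := Finset.sum_congr rfl fun a ha => by
          simp only [mul_sub, mul_one, Finset.sum_sub_distrib, G.P_sum s a ha]
  | qreach | qsafe => exact ho.elim

end MarkovChain

section Game

variable {G : SG S L} {n : ℕ} {Ω : Fin n → Obj S} {v : S → Fin n → ℝ} {σ τ : Strategy G}

omit [DecidableEq S] [DecidableEq L] in
theorem actionVal_mono {w w' : S → Fin n → ℝ} (h : ∀ s', lexLe (w s') (w' s')) (s : S) (a : L) :
    lexLe (actionVal G w s a) (actionVal G w' s a) :=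
  lexLe_sum Finset.univ (G.P s a) w w' (fun s' _ => G.P_nonneg s a s') fun s' _ => h s'

omit [DecidableEq L] in
theorem SG.Absorbing.P_eq_zero {s : S} (hs : G.Absorbing s) {a : L} (ha : a ∈ G.Act s)
    {s' : S} (hs' : s' ≠ s) : G.P s a s' = 0 := by
  have hrest : ∑ x ∈ Finset.univ.erase s, G.P s a x = 0 := by
    have := Finset.add_sum_erase _ (G.P s a) (Finset.mem_univ s)
    rw [G.P_sum s a ha, hs a ha] at this
    linarith
  exact (Finset.sum_eq_zero_iff_of_nonneg fun x _ => G.P_nonneg s a x).1 hrest s'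
    (Finset.mem_erase.2 ⟨hs', Finset.mem_univ _⟩)

omit [DecidableEq L] in
theorem SG.Absorbing.actionVal_eq {s : S} (hs : G.Absorbing s) {a : L} (ha : a ∈ G.Act s) :
    actionVal G v s a = v s := by
  funext i
  rw [actionVal, Finset.sum_eq_single s (fun s' _ hs' => by
    rw [hs.P_eq_zero ha hs', zero_mul]) (absurd (Finset.mem_univ s)),
    hs a ha, one_mul]

omit [DecidableEq L] in
theorem SG.Absorbing.optAction {s : S} (hs : G.Absorbing s) {a : L} (ha : a ∈ G.Act s) :
    OptAction G v s a := by
  have hval : ∀ b ∈ G.Act s, actionVal G v s b = v s := fun b hb => hs.actionVal_eq hb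
  exact ⟨fun _ b hb => by rw [hval b hb, hval a ha]; exact Or.inl rfl,
    fun _ b hb => by rw [hval b hb, hval a ha]; exact Or.inl rfl⟩

omit [DecidableEq L] in
theorem MaxOptimal.payoff_eq_of_optimalCounter (hσ : MaxOptimal G Ω σ v)
    (hτ : OptimalCounter G Ω σ τ) : payoff G Ω σ τ [] = v :=
  funext fun s => lexLe_antisymm ((hσ s).2 _ (hτ s).1) ((hτ s).2 _ (hσ s).1)

theorem payoff_eq_actionVal_shift (hΩ : ∀ i, (Ω i).Plain) {s : S} (hs : ∀ i, s ∉ (Ω i).targets)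
    {b : L} (hb : b ∈ G.Act s) (hfirst : ∀ c, stepProb G σ τ [] s c = if c = b then 1 else 0) :
    payoff G Ω σ τ [] s = actionVal G (payoff G Ω (σ.shift (s, b)) (τ.shift (s, b)) []) s b := by
  funext i
  rw [payoff, objProb_of_notMem_targets (hΩ i) (hs i),
    Finset.sum_eq_single_of_mem b hb fun c _ hc => by rw [hfirst, if_neg hc, zero_mul]]
  simp [hfirst, actionVal, payoff, objProb_cons (hΩ i)]

theorem actionVal_eq_value_of_stepProb_eq_ite (hΩ : ∀ i, (Ω i).Plain) (hσ : σ.Memoryless)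
    (hτ : τ.Memoryless) (hpay : payoff G Ω σ τ [] = v) {s : S} (hs : ∀ i, s ∉ (Ω i).targets)
    {b : L} (hb : b ∈ G.Act s) (hfirst : ∀ c, stepProb G σ τ [] s c = if c = b then 1 else 0) :
    actionVal G v s b = v s := by
  have := payoff_eq_actionVal_shift hΩ hs hb hfirst
  rwa [hσ.shift_eq, hτ.shift_eq, hpay, eq_comm] at this

theorem value_le_actionVal_of_not_isMax (hΩ : ∀ i, (Ω i).Plain) (hσopt : MaxOptimal G Ω σ v)
    (hσ : σ.Memoryless) (hτ : τ.Memoryless) (hpay : payoff G Ω σ τ [] = v) {s : S}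
    (hs : ∀ i, s ∉ (Ω i).targets) (hmin : ¬ G.isMax s) {b : L} (hb : b ∈ G.Act s) :
    lexLe (v s) (actionVal G v s b) := by
  have hdev : payoff G Ω σ (τ.deviate s b hb) [] s = actionVal G v s b := by
    rw [payoff_eq_actionVal_shift hΩ hs hb fun c => by
        rw [stepProb, if_neg hmin, Strategy.deviate_prob_nil_self],
      Strategy.shift_deviate, hσ.shift_eq, hτ.shift_eq, hpay]
  exact hdev ▸ (hσopt s).1 _ ⟨_, rfl⟩

theorem actionVal_le_value_of_isMax (hΩ : ∀ i, (Ω i).Plain) {s : S}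
    (hv : IsLexValue G Ω s (v s)) (hσopt : MaxOptimal G Ω σ v) (hσ : σ.Memoryless)
    (hτ : τ.Memoryless) (hpay : payoff G Ω σ τ [] = v) (hs : ∀ i, s ∉ (Ω i).targets)
    (hmax : G.isMax s) {b : L} (hb : b ∈ G.Act s) :
    lexLe (actionVal G v s b) (v s) := by
  have hdev (τ' : Strategy G) : payoff G Ω (σ.deviate s b hb) τ' [] s =
      actionVal G (payoff G Ω σ (τ'.shift (s, b)) []) s b := by
    rw [payoff_eq_actionVal_shift hΩ hs hb fun c => by
        rw [stepProb, if_pos hmax, Strategy.deviate_prob_nil_self],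
      Strategy.shift_deviate, hσ.shift_eq]
  have hglb : IsLexGLB (minPayoffs G Ω (σ.deviate s b hb) s) (actionVal G v s b) := by
    refine ⟨?_, fun u hu => hu _ ⟨τ, ?_⟩⟩
    · rintro _ ⟨τ', rfl⟩
      rw [hdev]
      exact actionVal_mono (fun s' => (hσopt s').1 _ ⟨_, rfl⟩) s b
    · rw [hdev, hτ.shift_eq, hpay]
  exact hv.1 _ ⟨_, hglb⟩

theorem locallyOptMax_of_md (hΩ : ∀ i, (Ω i).Plain) (habs : AbsorbingObj G Ω)
    (hv : ∀ s, IsLexValue G Ω s (v s)) (hσopt : MaxOptimal G Ω σ v) (hσ : σ.MD) (hτ : τ.MD)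
    (hpay : payoff G Ω σ τ [] = v) : LocallyOptMax G v σ := by
  intro h s a hmax hpos
  obtain ⟨ha, hite⟩ := hσ.prob_eq_ite_of_pos hpos
  by_cases ht : ∃ i, s ∈ (Ω i).targets
  · obtain ⟨i, hi⟩ := ht
    exact (habs i s hi).optAction ha
  push Not at ht
  have hplayed := actionVal_eq_value_of_stepProb_eq_ite hΩ hσ.1 hτ.1 hpay ht ha fun c => by
    rw [stepProb, if_pos hmax, hite]
  refine ⟨fun _ b hb => ?_, absurd hmax⟩
  rw [hplayed]
  exact actionVal_le_value_of_isMax hΩ (hv s) hσopt hσ.1 hτ.1 hpay ht hmax hb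

theorem locallyOptMin_of_md (hΩ : ∀ i, (Ω i).Plain) (habs : AbsorbingObj G Ω)
    (hσopt : MaxOptimal G Ω σ v) (hσ : σ.MD) (hτ : τ.MD)
    (hpay : payoff G Ω σ τ [] = v) : LocallyOptMin G v τ := by
  intro h s a hmin hpos
  obtain ⟨ha, hite⟩ := hτ.prob_eq_ite_of_pos hpos
  by_cases ht : ∃ i, s ∈ (Ω i).targets
  · obtain ⟨i, hi⟩ := ht
    exact (habs i s hi).optAction ha
  push Not at ht
  have hplayed := actionVal_eq_value_of_stepProb_eq_ite hΩ hσ.1 hτ.1 hpay ht ha fun c => by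
    rw [stepProb, if_neg hmin, hite]
  refine ⟨fun hmax => absurd hmax hmin, fun _ b hb => ?_⟩
  rw [hplayed]
  exact value_le_actionVal_of_not_isMax hΩ hσopt hσ.1 hτ.1 hpay ht hmin hb

end Game

theorem lex_optimal_md_locally_optimal_general {S L : Type} [Fintype S] [DecidableEq S]
    [Fintype L] [DecidableEq L] (G : SG S L) {n : ℕ} (Ω : Fin n → Obj S)
    (hplain : ∀ i, (Ω i).Plain) (habs : AbsorbingObj G Ω)
    (v : S → Fin n → ℝ) (hv : ∀ s, IsLexValue G Ω s (v s))
    (σ τ : Strategy G) (hσMD : σ.MD) (hτMD : τ.MD)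
    (hσopt : MaxOptimal G Ω σ v) (hτopt : OptimalCounter G Ω σ τ) :
    LocallyOptMax G v σ ∧ LocallyOptMin G v τ := by
  have hpay := hσopt.payoff_eq_of_optimalCounter hτopt
  exact ⟨locallyOptMax_of_md hplain habs hv hσopt hσMD hτMD hpay,
    locallyOptMin_of_md hplain habs hσopt hσMD hτMD hpay⟩

/-- **Lex-optimal MD strategies are locally lex-optimal.**
Let `Ω` be an absorbing lex-objective with lex-value function `v`. If `σ` is a
lex-optimal MD strategy of Max for `Ω` and `τ` is an MD lex-optimal counter-strategy
of Min against `σ`, then both `σ` and `τ` are locally lex-optimal. -/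
theorem lex_optimal_md_locally_optimal {S L : Type} [Fintype S] [DecidableEq S]
    [Nonempty S] [Fintype L] [DecidableEq L] (G : SG S L) {n : ℕ} (Ω : Fin n → Obj S)
    (hplain : ∀ i, (Ω i).Plain) (habs : AbsorbingObj G Ω)
    (v : S → Fin n → ℝ) (hv : ∀ s, IsLexValue G Ω s (v s))
    (σ τ : Strategy G) (hσMD : σ.MD) (hτMD : τ.MD)
    (hσopt : MaxOptimal G Ω σ v) (hτopt : OptimalCounter G Ω σ τ) :
    LocallyOptMax G v σ ∧ LocallyOptMin G v τ :=
  lex_optimal_md_locally_optimal_general G Ω hplain habs v hv σ τ hσMD hτMD hσopt hτopt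
end

section
/- Safety probabilities are the greatest fixpoint of the safety operator: Let (S, P) be a Markov chain on a countable state space S and let T ⊆ S. Define the operator 𝒮 : [0,1]^S → [0,1]^S by 𝒮(x)(s) = 0 if s ∈ T and 𝒮(x)(s) = Σ_{s'} P(s,s')·x(s') otherwise. Then 𝒮 is monotone on the complete lattice [0,1]^S (ordered pointwise), and the function w(s) = P_s(Safe(T)) = 1 − P_s(Reach(T)) is the greatest fixpoint of 𝒮. -/
open scoped Classical

/-- A Markov chain on a state space `S`: a transition function whose rows are
probability distributions. -/
structure MC (S : Type) where
  P : S → S → ℝ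
  nonneg : ∀ s s', 0 ≤ P s s'
  sum_one : ∀ s, HasSum (P s) 1

/-- Probability of reaching `T` from `s` within `k` steps. -/
noncomputable def MC.reachAux {S : Type} (M : MC S) (T : Set S) : ℕ → S → ℝ
  | 0, s => if s ∈ T then 1 else 0
  | k + 1, s => if s ∈ T then 1 else ∑' s', M.P s s' * M.reachAux T k s'

/-- `P_s(Reach T)`: the probability (under the path measure of the Markov chain
started at `s`) of the set of infinite paths that eventually visit `T`, obtained as
the supremum of the step-bounded reachability probabilities. -/
noncomputable def MC.PReach {S : Type} (M : MC S) (T : Set S) (s : S) : ℝ :=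
  ⨆ k : ℕ, M.reachAux T k s

/-- The safety operator `𝒮` for avoiding `T`:
`𝒮(x)(s) = 0` if `s ∈ T` and `𝒮(x)(s) = Σ_{s'} P(s,s')·x(s')` otherwise. -/
noncomputable def MC.safeOp {S : Type} (M : MC S) (T : Set S) (x : S → ℝ) : S → ℝ :=
  fun s => if s ∈ T then 0 else ∑' s', M.P s s' * x s'

/-! Reachability probabilities are the least fixpoint in `[0,1]^S` of the reachability operator
`ℛ(x)(s) = 1` if `s ∈ T`, `ℛ(x)(s) = Σ_{s'} P(s,s')·x(s')` otherwise, and `𝒮(1 - x) = 1 - ℛ(x)`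
exchanges the two operators. The `k`-step probabilities are the iterates `ℛ^{k+1}(0)`; they
increase to `PReach`, which is a fixpoint of `ℛ` by dominated convergence, and lie below every
fixpoint `y ∈ [0,1]^S` of `ℛ` because `ℛ` is monotone and `0 ≤ y`. -/

namespace MC

variable {S : Type} (M : MC S) (T : Set S)

noncomputable def reachOp (x : S → ℝ) : S → ℝ :=
  fun s => if s ∈ T then 1 else ∑' s', M.P s s' * x s'

section Expectation

variable {M} {x y : S → ℝ}

lemma summable_mul_of_mem_Icc (hx : ∀ s, x s ∈ Set.Icc (0 : ℝ) 1) (s : S) :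
    Summable fun s' => M.P s s' * x s' :=
  Summable.of_nonneg_of_le (fun s' => mul_nonneg (M.nonneg s s') (hx s').1)
    (fun s' => mul_le_of_le_one_right (M.nonneg s s') (hx s').2) (M.sum_one s).summable

lemma tsum_mul_mem_Icc (hx : ∀ s, x s ∈ Set.Icc (0 : ℝ) 1) (s : S) :
    ∑' s', M.P s s' * x s' ∈ Set.Icc (0 : ℝ) 1 :=
  ⟨tsum_nonneg fun s' => mul_nonneg (M.nonneg s s') (hx s').1,
    (M.sum_one s).tsum_eq ▸ (summable_mul_of_mem_Icc hx s).tsum_le_tsum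
      (fun s' => mul_le_of_le_one_right (M.nonneg s s') (hx s').2) (M.sum_one s).summable⟩

lemma tsum_mul_le_tsum_mul (hx : ∀ s, x s ∈ Set.Icc (0 : ℝ) 1)
    (hy : ∀ s, y s ∈ Set.Icc (0 : ℝ) 1) (hxy : x ≤ y) (s : S) :
    ∑' s', M.P s s' * x s' ≤ ∑' s', M.P s s' * y s' :=
  (summable_mul_of_mem_Icc hx s).tsum_le_tsum
    (fun s' => mul_le_mul_of_nonneg_left (hxy s') (M.nonneg s s')) (summable_mul_of_mem_Icc hy s)

lemma tsum_mul_one_sub (hx : ∀ s, x s ∈ Set.Icc (0 : ℝ) 1) (s : S) :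
    ∑' s', M.P s s' * (1 - x s') = 1 - ∑' s', M.P s s' * x s' := by
  simp only [mul_one_sub]
  rw [(M.sum_one s).summable.tsum_sub (summable_mul_of_mem_Icc hx s), (M.sum_one s).tsum_eq]

lemma tendsto_tsum_mul {f : ℕ → S → ℝ} {g : S → ℝ} (hf : ∀ k s, f k s ∈ Set.Icc (0 : ℝ) 1)
    (hfg : ∀ s, Filter.Tendsto (f · s) Filter.atTop (nhds (g s))) (s : S) :
    Filter.Tendsto (fun k => ∑' s', M.P s s' * f k s') Filter.atTop
      (nhds (∑' s', M.P s s' * g s')) := by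
  refine tendsto_tsum_of_dominated_convergence (M.sum_one s).summable
    (fun s' => (hfg s').const_mul _) (Filter.Eventually.of_forall fun k s' => ?_)
  rw [Real.norm_of_nonneg (mul_nonneg (M.nonneg s s') (hf k s').1)]
  exact mul_le_of_le_one_right (M.nonneg s s') (hf k s').2

end Expectation

variable {M T} {x y : S → ℝ}

lemma one_sub_mem_Icc (hx : ∀ s, x s ∈ Set.Icc (0 : ℝ) 1) (s : S) :
    1 - x s ∈ Set.Icc (0 : ℝ) 1 :=
  ⟨sub_nonneg.2 (hx s).2, sub_le_self 1 (hx s).1⟩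

lemma safeOp_mono (hx : ∀ s, x s ∈ Set.Icc (0 : ℝ) 1) (hy : ∀ s, y s ∈ Set.Icc (0 : ℝ) 1)
    (hxy : x ≤ y) : M.safeOp T x ≤ M.safeOp T y := fun s => by
  unfold safeOp
  split_ifs
  exacts [le_rfl, tsum_mul_le_tsum_mul hx hy hxy s]

lemma reachOp_mono (hx : ∀ s, x s ∈ Set.Icc (0 : ℝ) 1) (hy : ∀ s, y s ∈ Set.Icc (0 : ℝ) 1)
    (hxy : x ≤ y) : M.reachOp T x ≤ M.reachOp T y := fun s => by
  unfold reachOp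
  split_ifs
  exacts [le_rfl, tsum_mul_le_tsum_mul hx hy hxy s]

lemma reachOp_mem_Icc (hx : ∀ s, x s ∈ Set.Icc (0 : ℝ) 1) (s : S) :
    M.reachOp T x s ∈ Set.Icc (0 : ℝ) 1 := by
  unfold reachOp
  split_ifs
  exacts [⟨zero_le_one, le_rfl⟩, tsum_mul_mem_Icc hx s]

lemma safeOp_one_sub (hx : ∀ s, x s ∈ Set.Icc (0 : ℝ) 1) :
    M.safeOp T (fun s => 1 - x s) = fun s => 1 - M.reachOp T x s := funext fun s => by
  unfold safeOp reachOp
  split_ifs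
  exacts [(sub_self 1).symm, tsum_mul_one_sub hx s]

lemma reachOp_one_sub_of_safeOp_eq (hx : ∀ s, x s ∈ Set.Icc (0 : ℝ) 1)
    (hfix : M.safeOp T x = x) :
    M.reachOp T (fun s => 1 - x s) = fun s => 1 - x s := funext fun s => by
  have h := congrFun (safeOp_one_sub (M := M) (T := T) (one_sub_mem_Icc hx)) s
  simp only [sub_sub_cancel, hfix] at h
  linarith

variable (M T)

lemma reachAux_zero : M.reachAux T 0 = M.reachOp T 0 := funext fun s => by
  simp [reachAux, reachOp]

lemma reachAux_succ (k : ℕ) : M.reachAux T (k + 1) = M.reachOp T (M.reachAux T k) := rfl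

lemma reachAux_mem_Icc (k : ℕ) (s : S) : M.reachAux T k s ∈ Set.Icc (0 : ℝ) 1 := by
  induction k generalizing s with
  | zero =>
    exact reachAux_zero M T ▸ reachOp_mem_Icc (fun _ => Set.left_mem_Icc.2 zero_le_one) s
  | succ k ih => exact reachOp_mem_Icc ih s

lemma monotone_reachAux : Monotone (M.reachAux T) := by
  have h0 : ∀ s, (0 : S → ℝ) s ∈ Set.Icc (0 : ℝ) 1 := fun _ => Set.left_mem_Icc.2 zero_le_one
  refine monotone_nat_of_le_succ fun k => ?_
  induction k with
  | zero =>
    rw [reachAux_succ, reachAux_zero]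
    exact reachOp_mono h0 (reachOp_mem_Icc h0) fun s => (reachOp_mem_Icc h0 s).1
  | succ k ih =>
    exact reachOp_mono (reachAux_mem_Icc M T k) (reachAux_mem_Icc M T (k + 1)) ih

lemma bddAbove_range_reachAux (s : S) : BddAbove (Set.range fun k => M.reachAux T k s) :=
  ⟨1, Set.forall_mem_range.2 fun k => (reachAux_mem_Icc M T k s).2⟩

lemma PReach_mem_Icc (s : S) : M.PReach T s ∈ Set.Icc (0 : ℝ) 1 :=
  ⟨le_ciSup_of_le (bddAbove_range_reachAux M T s) 0 (reachAux_mem_Icc M T 0 s).1,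
    ciSup_le fun k => (reachAux_mem_Icc M T k s).2⟩

lemma tendsto_reachAux_PReach (s : S) :
    Filter.Tendsto (M.reachAux T · s) Filter.atTop (nhds (M.PReach T s)) :=
  tendsto_atTop_ciSup (fun _ _ hkl => monotone_reachAux M T hkl s)
    (bddAbove_range_reachAux M T s)

lemma reachOp_PReach : M.reachOp T (M.PReach T) = M.PReach T := funext fun s => by
  have hsucc : Filter.Tendsto (fun k => M.reachOp T (M.reachAux T k) s) Filter.atTop
      (nhds (M.PReach T s)) :=
    (tendsto_reachAux_PReach M T s).comp (Filter.tendsto_add_atTop_nat 1)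
  refine tendsto_nhds_unique ?_ hsucc
  unfold reachOp
  split_ifs
  · exact tendsto_const_nhds
  · exact tendsto_tsum_mul (reachAux_mem_Icc M T) (tendsto_reachAux_PReach M T) s

lemma PReach_le_of_reachOp_eq (hy : ∀ s, y s ∈ Set.Icc (0 : ℝ) 1)
    (hfix : M.reachOp T y = y) : M.PReach T ≤ y := fun s => by
  have h0 : ∀ s, (0 : S → ℝ) s ∈ Set.Icc (0 : ℝ) 1 := fun _ => Set.left_mem_Icc.2 zero_le_one
  have hk : ∀ k, M.reachAux T k ≤ y := fun k => by
    induction k with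
    | zero => exact reachAux_zero M T ▸ hfix ▸ reachOp_mono h0 hy fun s => (hy s).1
    | succ k ih => exact hfix ▸ reachOp_mono (reachAux_mem_Icc M T k) hy ih
  exact ciSup_le fun k => hk k s

end MC

theorem safe_prob_greatest_fixpoint_general {S : Type} (M : MC S) (T : Set S) :
    (∀ x y : S → ℝ, (∀ s, x s ∈ Set.Icc (0 : ℝ) 1) → (∀ s, y s ∈ Set.Icc (0 : ℝ) 1) →
      x ≤ y → M.safeOp T x ≤ M.safeOp T y) ∧
    (∀ s, (1 - M.PReach T s) ∈ Set.Icc (0 : ℝ) 1) ∧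
    M.safeOp T (fun s => 1 - M.PReach T s) = (fun s => 1 - M.PReach T s) ∧
    (∀ x : S → ℝ, (∀ s, x s ∈ Set.Icc (0 : ℝ) 1) → M.safeOp T x = x →
      x ≤ fun s => 1 - M.PReach T s) := by
  have hPReach := M.PReach_mem_Icc T
  refine ⟨fun x y hx hy => MC.safeOp_mono hx hy, fun s => ?_, ?_, fun x hx hfix => ?_⟩
  · exact MC.one_sub_mem_Icc hPReach s
  · rw [MC.safeOp_one_sub hPReach, M.reachOp_PReach T]
  · intro s
    linarith [M.PReach_le_of_reachOp_eq T (MC.one_sub_mem_Icc hx)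
      (MC.reachOp_one_sub_of_safeOp_eq hx hfix) s]

/-- **Safety probabilities are the greatest fixpoint of the safety operator.**
For a Markov chain on a countable state space `S` and `T ⊆ S`, the operator `𝒮` is
monotone on the complete lattice `[0,1]^S` (ordered pointwise), the function
`w(s) = P_s(Safe T) = 1 − P_s(Reach T)` is `[0,1]`-valued and is a fixpoint of `𝒮`,
and it is above every `[0,1]`-valued fixpoint of `𝒮`. -/
theorem safe_prob_greatest_fixpoint {S : Type} [Countable S] (M : MC S) (T : Set S) :
    (∀ x y : S → ℝ, (∀ s, x s ∈ Set.Icc (0 : ℝ) 1) → (∀ s, y s ∈ Set.Icc (0 : ℝ) 1) →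
      x ≤ y → M.safeOp T x ≤ M.safeOp T y) ∧
    (∀ s, (1 - M.PReach T s) ∈ Set.Icc (0 : ℝ) 1) ∧
    M.safeOp T (fun s => 1 - M.PReach T s) = (fun s => 1 - M.PReach T s) ∧
    (∀ x : S → ℝ, (∀ s, x s ∈ Set.Icc (0 : ℝ) 1) → M.safeOp T x = x →
      x ≤ fun s => 1 - M.PReach T s) :=
  safe_prob_greatest_fixpoint_general M T
end
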